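/- arXiv:2406.16065 — 6 statements merged into one kernel-verified Lean document; each statement's English description precedes it below -/
import Mathlib

section
/- Let θ ∈ ℝ with cos θ > 0 and tan θ = p/q, where p and q are coprime integers, p ≠ 0, q ≥ 1, and set T = q / cos θ. Then for all t ∈ ℝ: a'(t+T) = a'(t) and b'(t+T) = b'(t), and c'(t+T) = {c'(t) − pq/2}; consequently, if p or q is even (equivalently pq is even) then the curve t ↦ (a'(t), b'(t), c'(t)) is periodic with period T, while if both p and q are odd it is periodic with period 2T and c'(t+T) = {c'(t) + 1/2} for all t. -/
open Real

/-- Coordinate `a'` of the projected geodesic-line on the Heisenberg nil-manifold. -/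
noncomputable def aLine (θ t : ℝ) : ℝ := Int.fract (t * Real.cos θ)

/-- Coordinate `b'` of the projected geodesic-line on the Heisenberg nil-manifold. -/
noncomputable def bLine (θ t : ℝ) : ℝ := Int.fract (t * Real.sin θ)

/-- Coordinate `c'` of the projected geodesic-line on the Heisenberg nil-manifold. -/
noncomputable def cLine (θ t : ℝ) : ℝ :=
  Int.fract (t ^ 2 / 2 * Real.sin θ * Real.cos θ - (⌊t * Real.cos θ⌋ : ℝ) * (t * Real.sin θ))

lemma fract_sub_eq (x y : ℝ) : Int.fract (Int.fract x - y) = Int.fract (x - y) := by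
  rw [show Int.fract x - y = (x - y) - (⌊x⌋ : ℝ) by rw [Int.fract]; ring, Int.fract_sub_intCast]

lemma fract_add_eq (x y : ℝ) : Int.fract (Int.fract x + y) = Int.fract (x + y) := by
  rw [show Int.fract x + y = (x + y) - (⌊x⌋ : ℝ) by rw [Int.fract]; ring, Int.fract_sub_intCast]

theorem stmt0 (θ : ℝ) (p q : ℤ) (hcos : 0 < Real.cos θ) (hp : p ≠ 0) (hq : 1 ≤ q)
    (hcop : IsCoprime p q) (htan : Real.tan θ = (p : ℝ) / (q : ℝ))
    (T : ℝ) (hT : T = (q : ℝ) / Real.cos θ) :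
    (∀ t : ℝ, aLine θ (t + T) = aLine θ t ∧ bLine θ (t + T) = bLine θ t ∧
      cLine θ (t + T) = Int.fract (cLine θ t - (p : ℝ) * (q : ℝ) / 2)) ∧
    (Even (p * q) → ∀ t : ℝ,
      aLine θ (t + T) = aLine θ t ∧ bLine θ (t + T) = bLine θ t ∧
      cLine θ (t + T) = cLine θ t) ∧
    (Odd p → Odd q →
      (∀ t : ℝ, cLine θ (t + T) = Int.fract (cLine θ t + 1 / 2)) ∧
      (∀ t : ℝ, aLine θ (t + 2 * T) = aLine θ t ∧ bLine θ (t + 2 * T) = bLine θ t ∧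
        cLine θ (t + 2 * T) = cLine θ t)) := by
  have hc : Real.cos θ ≠ 0 := ne_of_gt hcos
  have hq0 : (q : ℝ) ≠ 0 := by
    have : (0:ℝ) < (q:ℝ) := by exact_mod_cast lt_of_lt_of_le zero_lt_one hq
    exact ne_of_gt this
  have hTc : T * Real.cos θ = (q : ℝ) := by rw [hT]; field_simp
  have hsin : Real.sin θ * (q : ℝ) = Real.cos θ * (p : ℝ) := by
    have h := htan
    rw [Real.tan_eq_sin_div_cos] at h
    field_simp at h
    linarith
  have hTs : T * Real.sin θ = (p : ℝ) := by
    rw [hT]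
    field_simp
    linarith [hsin]
  -- basic translations
  have ha : ∀ t : ℝ, aLine θ (t + T) = aLine θ t := by
    intro t
    unfold aLine
    rw [add_mul, hTc, Int.fract_add_intCast]
  have hb : ∀ t : ℝ, bLine θ (t + T) = bLine θ t := by
    intro t
    unfold bLine
    rw [add_mul, hTs, Int.fract_add_intCast]
  have hcl : ∀ t : ℝ, cLine θ (t + T) = Int.fract (cLine θ t - (p : ℝ) * (q : ℝ) / 2) := by
    intro t
    unfold cLine
    have hfl : ⌊(t + T) * Real.cos θ⌋ = ⌊t * Real.cos θ⌋ + q := by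
      rw [add_mul, hTc, Int.floor_add_intCast]
    rw [hfl]
    set A : ℝ := t ^ 2 / 2 * Real.sin θ * Real.cos θ - (⌊t * Real.cos θ⌋ : ℝ) * (t * Real.sin θ)
      with hA
    have key : (t + T) ^ 2 / 2 * Real.sin θ * Real.cos θ
        - ((⌊t * Real.cos θ⌋ + q : ℤ) : ℝ) * ((t + T) * Real.sin θ)
        = (A - (p : ℝ) * (q : ℝ) / 2) - ((⌊t * Real.cos θ⌋ * p : ℤ) : ℝ) := by
      rw [hA]
      push_cast
      linear_combination (t * Real.sin θ + T * Real.sin θ / 2) * hTc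
        + (-((⌊t * Real.cos θ⌋ : ℝ)) - (q : ℝ) + (q : ℝ) / 2) * hTs
    rw [key, Int.fract_sub_intCast, ← fract_sub_eq A ((p : ℝ) * (q : ℝ) / 2)]
  refine ⟨fun t => ⟨ha t, hb t, hcl t⟩, ?_, ?_⟩
  · rintro ⟨k, hk⟩ t
    refine ⟨ha t, hb t, ?_⟩
    have hk' : (p : ℝ) * (q : ℝ) / 2 = (k : ℝ) := by
      have : ((p * q : ℤ) : ℝ) = ((k + k : ℤ) : ℝ) := by rw [hk]
      push_cast at this
      linarith
    rw [hcl t, hk', Int.fract_sub_intCast]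
    simp only [cLine, Int.fract_fract]
  · intro hpo hqo
    have hpq : Odd (p * q) := hpo.mul hqo
    obtain ⟨k, hk⟩ := hpq
    have hk' : (p : ℝ) * (q : ℝ) / 2 = (k : ℝ) + 1 / 2 := by
      have : ((p * q : ℤ) : ℝ) = ((2 * k + 1 : ℤ) : ℝ) := by rw [hk]
      push_cast at this
      linarith
    have hcl2 : ∀ t : ℝ, cLine θ (t + T) = Int.fract (cLine θ t + 1 / 2) := by
      intro t
      rw [hcl t, hk']
      rw [show cLine θ t - ((k : ℝ) + 1 / 2) = cLine θ t + 1 / 2 - ((k + 1 : ℤ) : ℝ) by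
        push_cast; ring]
      rw [Int.fract_sub_intCast]
    refine ⟨hcl2, fun t => ?_⟩
    have h2 : t + 2 * T = (t + T) + T := by ring
    refine ⟨by rw [h2, ha, ha], by rw [h2, hb, hb], ?_⟩
    rw [h2, hcl2, hcl2, fract_add_eq]
    have : cLine θ t + 1 / 2 + 1 / 2 = cLine θ t + ((1 : ℤ) : ℝ) := by push_cast; ring
    rw [this, Int.fract_add_intCast]
    simp only [cLine, Int.fract_fract]
end

section
/- Let θ ∈ ℝ be such that cos θ ≠ 0, sin θ ≠ 0 and tan θ is irrational. Then the set {(a'(t), b'(t), c'(t)) : t ≥ 0} is dense in the cube [0,1]³ ⊂ ℝ³ (and likewise the set obtained for t ≤ 0 is dense in [0,1]³). -/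
open Real Set

/-!
If `t cos θ = M + a` with `M ∈ ℤ` and `a ∈ [0, 1)`, the curve passes at time `t` through
`(a, {(M + a)τ}, {(a² - M²)τ/2})`, `τ = tan θ`, so everything reduces to the density of
`(mτ, m²τ/2)` in `ℝ²/ℤ²` along `m → +∞`.

Let `V ⊆ ℝ/ℤ` be the set of limits of `n²τ/2` along times `n` with `nτ → 0` in `ℝ/ℤ`.
Since `(m + n)²τ/2 = m²τ/2 + n²τ/2 + m·nτ`, and `m·nτ` is small when `nτ` is small enough
compared to `m`, `V` is a closed subgroup of the circle. If it were not dense, some `N > 0`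
would kill it, and by compactness `N n²τ/2 ≈ 0` whenever `nτ ≈ 0`. Polarising, `N m n τ ≈ 0`
whenever `mτ ≈ 0` and `nτ ≈ 0`, which fails for `m` large and `nτ ≈ 1/(4Nm)`. Hence `V` is
dense, and adding a time `r` with `rτ ≈ u` to a time `n` with `nτ` tiny and
`n²τ/2 ≈ v - r²τ/2` gives `(r + n)τ ≈ u` and `(r + n)²τ/2 ≈ v`.
-/

open Filter Topology

local notation "𝕋" => UnitAddCircle

namespace AddCircle

variable {p : ℝ} [Fact (0 < p)]

theorem dense_or_exists_nsmul_eq_zero (S : AddSubgroup (AddCircle p)) :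
    Dense (S : Set (AddCircle p)) ∨ ∃ N : ℕ, 0 < N ∧ ∀ s ∈ S, N • s = 0 := by
  refine or_iff_not_imp_left.2 fun hS => ?_
  obtain ⟨a, ha, rfl⟩ : ∃ a, addOrderOf a ≠ 0 ∧ S = .zmultiples a := by
    simpa [dense_addSubgroup_iff_ne_zmultiples] using hS
  refine ⟨addOrderOf a, Nat.pos_of_ne_zero ha, ?_⟩
  rintro _ ⟨k, rfl⟩
  rw [smul_comm, addOrderOf_nsmul_eq_zero, smul_zero]

theorem exists_nsmul_near {x : AddCircle p} (hx : addOrderOf x = 0) (u : AddCircle p) (B : ℕ)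
    {ε : ℝ} (hε : 0 < ε) : ∃ n : ℕ, B ≤ n ∧ ‖n • x - u‖ < ε := by
  obtain ⟨z, hz⟩ := (denseRange_zsmul_iff.2 hx).exists_dist_lt u (half_pos hε)
  obtain ⟨N, hN⟩ := exists_nat_gt (2 * p / ε)
  have hp : 0 < p := Fact.out
  have hN0 : 0 < N := by exact_mod_cast (div_pos (by positivity) hε).trans hN
  -- a return time of `x` that is a multiple of `L` shifts `z` to an index `≥ B`
  set L := B + z.natAbs
  obtain ⟨k, hk, hkx⟩ := exists_norm_nsmul_le (L • x) hN0
  have hnonneg : B ≤ z + (k * L : ℕ) := by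
    have : L ≤ k * L := Nat.le_mul_of_pos_left L hk.1
    omega
  refine ⟨(z + (k * L : ℕ)).toNat, by omega, ?_⟩
  have hsplit : (z + (k * L : ℕ)).toNat • x - u = (z • x - u) + k • L • x := by
    rw [← natCast_zsmul, Int.toNat_of_nonneg (by omega), add_zsmul, natCast_zsmul, mul_nsmul']
    abel
  rw [hsplit]
  have hNε : p / ↑(N + 1) < ε / 2 := by
    rw [div_lt_iff₀ (by positivity)]
    rw [div_lt_iff₀ hε] at hN
    push_cast; nlinarith
  calc ‖z • x - u + k • L • x‖ ≤ ‖z • x - u‖ + ‖k • L • x‖ := norm_add_le _ _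
    _ < ε / 2 + ε / 2 := by
      rw [← dist_eq_norm, dist_comm]
      exact add_lt_add_of_lt_of_le hz (hkx.trans hNε.le)
    _ = ε := add_halves ε

end AddCircle

namespace UnitAddCircle

theorem norm_coe_le_abs (x : ℝ) : ‖(x : 𝕋)‖ ≤ |x| := by
  simpa [norm_eq] using round_le x 0

def IsReturnLimit (h s : 𝕋) : Prop :=
  ∀ δ > 0, ∀ ε > 0, ∃ n : ℕ, ‖n • (2 • h)‖ < δ ∧ ‖n ^ 2 • h - s‖ < ε

variable {h : 𝕋}

theorem isReturnLimit_zero : IsReturnLimit h 0 :=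
  fun δ hδ ε hε => ⟨0, by simpa using hδ, by simpa using hε⟩

theorem IsReturnLimit.add {s t : 𝕋} (hs : IsReturnLimit h s) (ht : IsReturnLimit h t) :
    IsReturnLimit h (s + t) := by
  intro δ hδ ε hε
  obtain ⟨m, hm, hms⟩ := hs (δ / 2) (half_pos hδ) (ε / 3) (by positivity)
  -- `n • (2 • h)` must be small enough for the cross term `m • n • (2 • h)` to be `< ε / 3`
  obtain ⟨n, hn, hnt⟩ := ht (min (δ / 2) (ε / (3 * (m + 1)))) (by positivity) (ε / 3)
    (by positivity)
  refine ⟨m + n, ?_, ?_⟩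
  · calc ‖(m + n) • (2 • h)‖ ≤ ‖m • (2 • h)‖ + ‖n • (2 • h)‖ := by
          rw [add_nsmul]; exact norm_add_le _ _
      _ < δ / 2 + δ / 2 := add_lt_add hm (hn.trans_le (min_le_left _ _))
      _ = δ := add_halves δ
  · have hcross : ‖m • n • (2 • h)‖ < ε / 3 :=
      calc ‖m • n • (2 • h)‖ ≤ m * ‖n • (2 • h)‖ := norm_nsmul_le
        _ ≤ m * (ε / (3 * (m + 1))) := by gcongr; exact hn.le.trans (min_le_right _ _)
        _ < ε / 3 := by
          rw [mul_div_assoc', div_lt_div_iff₀ (by positivity) (by positivity)]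
          nlinarith
    calc ‖(m + n) ^ 2 • h - (s + t)‖
        = ‖(m ^ 2 • h - s) + (n ^ 2 • h - t) + m • n • (2 • h)‖ := by congr 1; module
      _ ≤ ‖m ^ 2 • h - s‖ + ‖n ^ 2 • h - t‖ + ‖m • n • (2 • h)‖ := norm_add₃_le
      _ < ε / 3 + ε / 3 + ε / 3 := by gcongr
      _ = ε := by ring

theorem isClosed_setOf_isReturnLimit : IsClosed {s | IsReturnLimit h s} := by
  refine isClosed_of_closure_subset fun s hs δ hδ ε hε => ?_
  obtain ⟨t, ht, hst⟩ := Metric.mem_closure_iff.1 hs (ε / 2) (half_pos hε)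
  obtain ⟨n, hn, hnt⟩ := ht δ hδ (ε / 2) (half_pos hε)
  refine ⟨n, hn, ?_⟩
  calc ‖n ^ 2 • h - s‖ ≤ ‖n ^ 2 • h - t‖ + ‖t - s‖ := norm_sub_le_norm_sub_add_norm_sub _ _ _
    _ < ε / 2 + ε / 2 := by rw [← dist_eq_norm t, dist_comm]; gcongr
    _ = ε := add_halves ε

theorem IsReturnLimit.nsmul {s : 𝕋} (hs : IsReturnLimit h s) : ∀ k : ℕ, IsReturnLimit h (k • s)
  | 0 => by rw [zero_nsmul]; exact isReturnLimit_zero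
  | k + 1 => by rw [succ_nsmul]; exact (hs.nsmul k).add hs

theorem IsReturnLimit.neg {s : 𝕋} (hs : IsReturnLimit h s) : IsReturnLimit h (-s) := by
  -- by Dirichlet, `-s` is approximated by `(k - 1) • s` where `k • s ≈ 0`
  refine isClosed_setOf_isReturnLimit.closure_subset (Metric.mem_closure_iff.2 fun ε hε => ?_)
  obtain ⟨N, hN⟩ := exists_nat_gt (1 / ε)
  obtain ⟨_, ⟨hk, -⟩, hks⟩ := AddCircle.exists_norm_nsmul_le s (n := N) (by
    exact_mod_cast (one_div_pos.2 hε).trans hN)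
  obtain ⟨k, rfl⟩ := Nat.exists_eq_add_of_le' hk
  refine ⟨k • s, hs.nsmul k, ?_⟩
  rw [dist_eq_norm, ← norm_neg, neg_sub, sub_neg_eq_add, ← succ_nsmul]
  refine hks.trans_lt ?_
  rw [div_lt_iff₀ (by positivity)]
  rw [div_lt_iff₀ hε] at hN
  push_cast; nlinarith

def returnLimits (h : 𝕋) : AddSubgroup 𝕋 where
  carrier := {s | IsReturnLimit h s}
  zero_mem' := isReturnLimit_zero
  add_mem' := IsReturnLimit.add
  neg_mem' := IsReturnLimit.neg

theorem exists_isReturnLimit_near {ε : ℝ} (hε : 0 < ε) :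
    ∃ δ > 0, ∀ n : ℕ, ‖n • (2 • h)‖ < δ → ∃ s, IsReturnLimit h s ∧ ‖n ^ 2 • h - s‖ < ε := by
  by_contra! hfar
  set K := {y : 𝕋 | ∀ s, IsReturnLimit h s → ε ≤ ‖y - s‖}
  have hK : IsClosed K := by
    simp only [K, Set.ofPred_forall]
    exact isClosed_iInter fun s => isClosed_iInter fun _ =>
      isClosed_le continuous_const (continuous_id.sub continuous_const).norm
  have hfreq : ∃ᶠ n in comap (fun n : ℕ => n • (2 • h)) (𝓝 0), n ^ 2 • h ∈ K := by
    rw [(Metric.nhds_basis_ball.comap _).frequently_iff]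
    intro δ hδ
    obtain ⟨n, hn, hnK⟩ := hfar δ hδ
    exact ⟨n, by simpa using hn, hnK⟩
  obtain ⟨y, hyK, hy⟩ := hK.isCompact.exists_mapClusterPt_of_frequently hfreq
  have hyV : IsReturnLimit h y := fun δ hδ ε' hε' =>
    ((hy.frequently (Metric.ball_mem_nhds y hε')).and_eventually
      (preimage_mem_comap (Metric.ball_mem_nhds 0 hδ))).exists.imp
      fun n hn => ⟨by simpa using hn.2, by simpa [dist_eq_norm] using hn.1⟩
  exact hε.not_ge (by simpa using hyK y hyV)

theorem not_forall_isReturnLimit_nsmul_eq_zero (hx : addOrderOf (2 • h) = 0) {N : ℕ}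
    (hN : 0 < N) : ¬ ∀ s, IsReturnLimit h s → N • s = 0 := by
  intro htors
  have hN' : (0 : ℝ) < N := by exact_mod_cast hN
  obtain ⟨δ, hδ, hnear⟩ := exists_isReturnLimit_near (h := h) (ε := 1 / (16 * N)) (by positivity)
  have hsq : ∀ n : ℕ, ‖n • (2 • h)‖ < δ → ‖(N * n ^ 2) • h‖ < 1 / 16 := by
    intro n hn
    obtain ⟨s, hs, hns⟩ := hnear n hn
    calc ‖(N * n ^ 2) • h‖ = ‖N • (n ^ 2 • h - s)‖ := by
          rw [smul_sub, htors s hs, sub_zero, mul_nsmul']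
      _ ≤ N * ‖n ^ 2 • h - s‖ := norm_nsmul_le
      _ < N * (1 / (16 * N)) := by gcongr
      _ = 1 / 16 := by field_simp
  have hcross : ∀ m n : ℕ, ‖m • (2 • h)‖ < δ / 2 → ‖n • (2 • h)‖ < δ / 2 →
      ‖(N * m * n) • (2 • h)‖ < 3 / 16 := by
    intro m n hm hn
    have hmn : ‖(m + n) • (2 • h)‖ < δ := by
      rw [add_nsmul]
      linarith [norm_add_le (m • (2 • h)) (n • (2 • h))]
    calc ‖(N * m * n) • (2 • h)‖
        = ‖(N * (m + n) ^ 2) • h - (N * m ^ 2) • h - (N * n ^ 2) • h‖ := by congr 1; module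
      _ ≤ ‖(N * (m + n) ^ 2) • h‖ + ‖(N * m ^ 2) • h‖ + ‖(N * n ^ 2) • h‖ :=
          (norm_sub_le _ _).trans (by gcongr; exact norm_sub_le _ _)
      _ < 1 / 16 + 1 / 16 + 1 / 16 := by gcongr <;> apply hsq <;> linarith
      _ = 3 / 16 := by norm_num
  obtain ⟨q, hqB, hq⟩ := AddCircle.exists_nsmul_near hx 0 ⌈1 / (N * δ)⌉₊ (half_pos hδ)
  rw [sub_zero] at hq
  have hqδ : 1 / (N * δ) ≤ q := (Nat.le_ceil _).trans (by exact_mod_cast hqB)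
  have hq' : (0 : ℝ) < q := lt_of_lt_of_le (by positivity) hqδ
  -- `n • (2 • h) ≈ w / 4` is small as `q` is large, yet `(N * q * n) • (2 • h) ≈ 1 / 4`
  set w : ℝ := 1 / (N * q)
  have hw : 0 < w := by positivity
  have hwδ : w ≤ δ := by
    rw [div_le_iff₀ (by positivity)] at hqδ ⊢
    nlinarith
  obtain ⟨n, -, hn⟩ := AddCircle.exists_nsmul_near hx ((w / 4 : ℝ) : 𝕋) 0 (ε := w / 16)
    (by positivity)
  have hn' : ‖n • (2 • h)‖ < δ / 2 :=
    calc ‖n • (2 • h)‖ ≤ ‖n • (2 • h) - ((w / 4 : ℝ) : 𝕋)‖ + ‖((w / 4 : ℝ) : 𝕋)‖ :=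
          norm_le_norm_sub_add _ _
      _ < w / 16 + w / 4 := add_lt_add_of_lt_of_le hn
          ((norm_coe_le_abs _).trans_eq (abs_of_pos (by positivity)))
      _ ≤ δ / 2 := by linarith
  have hquarter : ‖(N * q * n) • (2 • h) - ((1 / 4 : ℝ) : 𝕋)‖ < 1 / 16 :=
    calc ‖(N * q * n) • (2 • h) - ((1 / 4 : ℝ) : 𝕋)‖
        = ‖(N * q) • (n • (2 • h) - ((w / 4 : ℝ) : 𝕋))‖ := by
          rw [smul_sub, ← AddCircle.coe_nsmul, mul_nsmul', nsmul_eq_mul]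
          congr 3
          simp only [w]; push_cast; field_simp
      _ ≤ (N * q : ℕ) * ‖n • (2 • h) - ((w / 4 : ℝ) : 𝕋)‖ := norm_nsmul_le
      _ < (N * q : ℕ) * (w / 16) := mul_lt_mul_of_pos_left hn (by push_cast; positivity)
      _ = 1 / 16 := by simp only [w]; push_cast; field_simp
  have h14 : ‖((1 / 4 : ℝ) : 𝕋)‖ = 1 / 4 := by
    rw [(AddCircle.norm_coe_eq_abs_iff (1 : ℝ) one_ne_zero).2 (by norm_num)]
    norm_num
  linarith [hcross q n hq hn', norm_le_norm_sub_add ((1 / 4 : ℝ) : 𝕋) ((N * q * n) • (2 • h)),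
    norm_sub_rev ((1 / 4 : ℝ) : 𝕋) ((N * q * n) • (2 • h))]

theorem dense_returnLimits (hx : addOrderOf (2 • h) = 0) : Dense (returnLimits h : Set 𝕋) :=
  (AddCircle.dense_or_exists_nsmul_eq_zero _).resolve_right fun ⟨_, hN, htors⟩ =>
    not_forall_isReturnLimit_nsmul_eq_zero hx hN htors

theorem exists_nsmul_near_and_sq_nsmul_near (hx : addOrderOf (2 • h) = 0) (u v : 𝕋) {ε : ℝ}
    (hε : 0 < ε) : ∃ m : ℕ, 0 < m ∧ ‖m • (2 • h) - u‖ < ε ∧ ‖m ^ 2 • h - v‖ < ε := by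
  obtain ⟨r, hr, hru⟩ := AddCircle.exists_nsmul_near hx u 1 (half_pos hε)
  obtain ⟨s, hs, hvs⟩ := (dense_returnLimits hx).exists_dist_lt (v - r ^ 2 • h) (ε := ε / 4)
    (by positivity)
  obtain ⟨n, hn, hns⟩ := hs (ε / (4 * (r + 1))) (by positivity) (ε / 4) (by positivity)
  refine ⟨r + n, by omega, ?_, ?_⟩
  · calc ‖(r + n) • (2 • h) - u‖ ≤ ‖r • (2 • h) - u‖ + ‖n • (2 • h)‖ := by
          rw [add_nsmul, add_sub_right_comm]; exact norm_add_le _ _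
      _ < ε / 2 + ε / 2 := by
          refine add_lt_add hru (hn.trans_le ?_)
          rw [div_le_div_iff₀ (by positivity) (by positivity)]
          nlinarith
      _ = ε := add_halves ε
  · have hcross : ‖r • n • (2 • h)‖ < ε / 4 :=
      calc ‖r • n • (2 • h)‖ ≤ r * ‖n • (2 • h)‖ := norm_nsmul_le
        _ ≤ r * (ε / (4 * (r + 1))) := by gcongr
        _ < ε / 4 := by
          rw [mul_div_assoc', div_lt_div_iff₀ (by positivity) (by positivity)]
          nlinarith
    calc ‖(r + n) ^ 2 • h - v‖
        = ‖(n ^ 2 • h - s) - ((v - r ^ 2 • h) - s) + r • n • (2 • h)‖ := by congr 1; module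
      _ ≤ ‖n ^ 2 • h - s‖ + ‖(v - r ^ 2 • h) - s‖ + ‖r • n • (2 • h)‖ :=
          (norm_add_le _ _).trans (by gcongr; exact norm_sub_le _ _)
      _ < ε / 4 + ε / 4 + ε / 4 := by rw [← dist_eq_norm (v - _)]; gcongr
      _ < ε := by linarith

theorem exists_nat_near_mul_and_sq_mul {τ : ℝ} (hτ : Irrational τ) (u v : ℝ)
    {ε : ℝ} (hε : 0 < ε) :
    ∃ m : ℕ, 0 < m ∧ ‖((m * τ - u : ℝ) : 𝕋)‖ < ε ∧ ‖((m ^ 2 * τ / 2 - v : ℝ) : 𝕋)‖ < ε := by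
  have hτ2 : 2 • ((τ / 2 : ℝ) : 𝕋) = (τ : 𝕋) := by
    rw [← AddCircle.coe_nsmul, nsmul_eq_mul]; congr 1; ring
  have hx : addOrderOf (2 • ((τ / 2 : ℝ) : 𝕋)) = 0 := by
    rw [hτ2, addOrderOf_eq_zero_iff, AddCircle.not_isOfFinAddOrder_iff_forall_rat_ne_div]
    exact fun q hq => hτ ⟨q, by simpa using hq⟩
  obtain ⟨m, hm, h1, h2⟩ := exists_nsmul_near_and_sq_nsmul_near hx (u : 𝕋) (v : 𝕋) hε
  refine ⟨m, hm, ?_, ?_⟩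
  · convert h1 using 2
    rw [← AddCircle.coe_nsmul, ← AddCircle.coe_nsmul, ← AddCircle.coe_sub]
    congr 1; simp only [nsmul_eq_mul]; push_cast; ring
  · convert h2 using 2
    rw [← AddCircle.coe_nsmul, ← AddCircle.coe_sub]
    congr 1; simp only [nsmul_eq_mul]; push_cast; ring

end UnitAddCircle

theorem lines_eq_of_mul_cos_eq {θ t a : ℝ} {M : ℤ} (hcos : cos θ ≠ 0) (ha : a ∈ Ico 0 1)
    (ht : t * cos θ = M + a) :
    (aLine θ t, bLine θ t, cLine θ t) =
      (a, Int.fract ((M + a) * tan θ), Int.fract ((a ^ 2 - M ^ 2) * tan θ / 2)) := by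
  have hts : t * sin θ = (M + a) * tan θ := by
    rw [← ht, tan_eq_sin_div_cos]; field_simp
  have hfloor : ⌊t * cos θ⌋ = M := by
    rw [ht, Int.floor_intCast_add, Int.floor_eq_zero_iff.2 ha, add_zero]
  simp only [aLine, bLine, cLine, hfloor, hts, Prod.mk.injEq]
  refine ⟨by rw [ht, Int.fract_intCast_add, Int.fract_eq_self.2 ha], trivial, congrArg _ ?_⟩
  rw [show t ^ 2 / 2 * sin θ * cos θ = (t * cos θ) * (t * sin θ) / 2 by ring, ht, hts]
  ring

theorem lines_add_pi (θ t : ℝ) :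
    (aLine (θ + π) t, bLine (θ + π) t, cLine (θ + π) t) =
      (aLine θ (-t), bLine θ (-t), cLine θ (-t)) := by
  simp only [aLine, bLine, cLine, cos_add_pi, sin_add_pi, mul_neg, neg_mul, neg_neg, neg_sq]

theorem abs_fract_sub_lt_of_norm_coe_sub_lt {w y ε : ℝ} (hy₀ : ε ≤ y) (hy₁ : ε ≤ 1 - y)
    (hw : ‖((w - y : ℝ) : 𝕋)‖ < ε) : |Int.fract w - y| < ε := by
  rw [UnitAddCircle.norm_eq, abs_lt] at hw
  have hfract : Int.fract w = w - round (w - y) :=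
    Int.fract_eq_iff.2 ⟨by linarith [hw.1], by linarith [hw.2], round (w - y), by ring⟩
  rw [hfract, abs_lt]
  constructor <;> linarith [hw.1, hw.2]

theorem Ioo_cube_subset_closure_nonneg_ray {θ : ℝ} (hcos : cos θ ≠ 0)
    (hirr : Irrational (tan θ)) :
    Ioo (0 : ℝ) 1 ×ˢ Ioo (0 : ℝ) 1 ×ˢ Ioo (0 : ℝ) 1 ⊆
      closure {p : ℝ × ℝ × ℝ | ∃ t : ℝ, 0 ≤ t ∧ p = (aLine θ t, bLine θ t, cLine θ t)} := by
  rintro ⟨x, y, z⟩ hxyz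
  obtain ⟨hx, hy, hz⟩ : x ∈ Ioo 0 1 ∧ y ∈ Ioo 0 1 ∧ z ∈ Ioo 0 1 := by simpa using hxyz
  refine Metric.mem_closure_iff.2 fun ρ hρ => ?_
  set ε := min ρ (min (min y (1 - y)) (min z (1 - z)))
  have hε : 0 < ε := by
    simp only [ε, lt_min_iff, sub_pos]
    exact ⟨hρ, ⟨hy.1, hy.2⟩, hz.1, hz.2⟩
  -- the sign of `M` must be that of `cos θ` for `t = (M + x) / cos θ` to be nonnegative
  obtain ⟨M, ht, hMy, hMz⟩ : ∃ M : ℤ, 0 ≤ (M + x) / cos θ ∧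
      ‖(((M + x) * tan θ - y : ℝ) : 𝕋)‖ < ε ∧
      ‖(((x ^ 2 - M ^ 2) * tan θ / 2 - z : ℝ) : 𝕋)‖ < ε := by
    rcases hcos.lt_or_gt with hneg | hpos
    · obtain ⟨m, hm, h1, h2⟩ := UnitAddCircle.exists_nat_near_mul_and_sq_mul hirr.neg
        (y - x * tan θ) (z - x ^ 2 * tan θ / 2) hε
      refine ⟨-m, div_nonneg_of_nonpos ?_ hneg.le, ?_, ?_⟩
      · have : (1 : ℝ) ≤ m := Nat.one_le_cast.2 hm
        push_cast; linarith [hx.2]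
      · convert h1 using 3; push_cast; ring
      · convert h2 using 3; push_cast; ring
    · obtain ⟨m, -, h1, h2⟩ := UnitAddCircle.exists_nat_near_mul_and_sq_mul hirr
        (y - x * tan θ) (x ^ 2 * tan θ / 2 - z) hε
      have : (0 : ℝ) ≤ m := Nat.cast_nonneg m
      refine ⟨m, div_nonneg (by push_cast; linarith [hx.1]) hpos.le, ?_, ?_⟩
      · convert h1 using 3; push_cast; ring
      · rw [show (x ^ 2 - ((m : ℤ) : ℝ) ^ 2) * tan θ / 2 - z =
            -(m ^ 2 * tan θ / 2 - (x ^ 2 * tan θ / 2 - z)) by push_cast; ring,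
          AddCircle.coe_neg, norm_neg]
        exact h2
  refine ⟨_, ⟨(M + x) / cos θ, ht, rfl⟩, ?_⟩
  rw [lines_eq_of_mul_cos_eq hcos ⟨hx.1.le, hx.2⟩ (div_mul_cancel₀ _ hcos), Prod.dist_eq,
    Prod.dist_eq, dist_self, Real.dist_eq, Real.dist_eq, abs_sub_comm y, abs_sub_comm z]
  have hερ : ε ≤ ρ := min_le_left _ _
  refine max_lt hρ (max_lt ?_ ?_)
  · refine (abs_fract_sub_lt_of_norm_coe_sub_lt ?_ ?_ hMy).trans_le hερ <;> simp [ε]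
  · refine (abs_fract_sub_lt_of_norm_coe_sub_lt ?_ ?_ hMz).trans_le hερ <;> simp [ε]

theorem Icc_cube_subset_closure_nonneg_ray {θ : ℝ} (hcos : cos θ ≠ 0)
    (hirr : Irrational (tan θ)) :
    Icc (0 : ℝ) 1 ×ˢ Icc (0 : ℝ) 1 ×ˢ Icc (0 : ℝ) 1 ⊆
      closure {p : ℝ × ℝ × ℝ | ∃ t : ℝ, 0 ≤ t ∧ p = (aLine θ t, bLine θ t, cLine θ t)} := by
  simpa only [closure_prod_eq, closure_Ioo zero_ne_one] using
    closure_minimal (Ioo_cube_subset_closure_nonneg_ray hcos hirr) isClosed_closure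

theorem nonpos_ray_eq_nonneg_ray_add_pi (θ : ℝ) :
    {p : ℝ × ℝ × ℝ | ∃ t : ℝ, t ≤ 0 ∧ p = (aLine θ t, bLine θ t, cLine θ t)} =
      {p | ∃ t : ℝ, 0 ≤ t ∧ p = (aLine (θ + π) t, bLine (θ + π) t, cLine (θ + π) t)} := by
  ext p
  constructor
  · rintro ⟨t, ht, rfl⟩
    exact ⟨-t, neg_nonneg.2 ht, by rw [lines_add_pi, neg_neg]⟩
  · rintro ⟨t, ht, rfl⟩
    exact ⟨-t, neg_nonpos.2 ht, by rw [lines_add_pi]⟩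

theorem stmt1_general (θ : ℝ) (hcos : Real.cos θ ≠ 0)
    (hirr : Irrational (Real.tan θ)) :
    (Set.Icc (0:ℝ) 1 ×ˢ Set.Icc (0:ℝ) 1 ×ˢ Set.Icc (0:ℝ) 1 ⊆
      closure {x : ℝ × ℝ × ℝ | ∃ t : ℝ, 0 ≤ t ∧ x = (aLine θ t, bLine θ t, cLine θ t)}) ∧
    (Set.Icc (0:ℝ) 1 ×ˢ Set.Icc (0:ℝ) 1 ×ˢ Set.Icc (0:ℝ) 1 ⊆
      closure {x : ℝ × ℝ × ℝ | ∃ t : ℝ, t ≤ 0 ∧ x = (aLine θ t, bLine θ t, cLine θ t)}) := by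
  have hcos' : cos (θ + π) ≠ 0 := by rwa [cos_add_pi, neg_ne_zero]
  have hirr' : Irrational (tan (θ + π)) := by rwa [tan_periodic θ]
  refine ⟨Icc_cube_subset_closure_nonneg_ray hcos hirr, ?_⟩
  rw [nonpos_ray_eq_nonneg_ray_add_pi]
  exact Icc_cube_subset_closure_nonneg_ray hcos' hirr'

theorem stmt1 (θ : ℝ) (hcos : Real.cos θ ≠ 0) (hsin : Real.sin θ ≠ 0)
    (hirr : Irrational (Real.tan θ)) :
    (Set.Icc (0:ℝ) 1 ×ˢ Set.Icc (0:ℝ) 1 ×ˢ Set.Icc (0:ℝ) 1 ⊆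
      closure {x : ℝ × ℝ × ℝ | ∃ t : ℝ, 0 ≤ t ∧ x = (aLine θ t, bLine θ t, cLine θ t)}) ∧
    (Set.Icc (0:ℝ) 1 ×ˢ Set.Icc (0:ℝ) 1 ×ˢ Set.Icc (0:ℝ) 1 ⊆
      closure {x : ℝ × ℝ × ℝ | ∃ t : ℝ, t ≤ 0 ∧ x = (aLine θ t, bLine θ t, cLine θ t)}) :=
  stmt1_general θ hcos hirr
end

section
/- For every irrational real number r, the sequence of points ((2rn mod ℤ), (rn² mod ℤ)), n ∈ ℕ, is dense in the 2-torus 𝕋² = (ℝ/ℤ) × (ℝ/ℤ). Equivalently, the set {({2rn}, {rn²}) : n ∈ ℕ} is dense in [0,1]², where {x} denotes the fractional part of x. -/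
/-!
The points `(2rn, rn²)` form the orbit of `(0, 0)` under the skew shift
`T (x, y) = (x + 2r, y + x + r)` of the torus. A minimal closed `T`-invariant set `M` projects
onto the first circle because `2r` is irrational, and it is invariant under vertical translation
by a closed subgroup `H` of the circle that contains the difference of any two points of `M` in
the same fibre. If `H` were finite of order `k`, then `k • y` would be a function `ψ x` on `M`,
continuous by the closed graph theorem, with `ψ (x + n • 2r) = ψ x + (n * k) • x + d`; choosing
`n • 2r` close to `0` contradicts uniform continuity. Hence `H` is the whole circle, `M` is the
whole torus, and every orbit is dense. The fractional parts follow because `Int.fract` is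
continuous on the open unit square.
-/

open Set Function Pointwise

local notation "𝕋" => UnitAddCircle

theorem continuous_of_isClosed_graph {X Y : Type*} [TopologicalSpace X] [TopologicalSpace Y]
    [CompactSpace Y] {f : X → Y} (hf : IsClosed {p : X × Y | p.2 = f p.1}) : Continuous f := by
  refine continuous_iff_isClosed.2 fun C hC => ?_
  have hpre : f ⁻¹' C = Prod.fst '' ({p : X × Y | p.2 = f p.1} ∩ univ ×ˢ C) := by
    ext x
    constructor
    · intro hx
      exact ⟨(x, f x), ⟨rfl, trivial, hx⟩, rfl⟩
    · rintro ⟨p, ⟨hp, -, hpC⟩, rfl⟩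
      rwa [mem_preimage, ← hp]
  rw [hpre]
  exact isClosedMap_fst_of_compactSpace _ (hf.inter (isClosed_univ.prod hC))

theorem IsClosed.eq_univ_of_add_mem {G : Type*} [AddGroup G] [TopologicalSpace G]
    [ContinuousAdd G] {a : G} (ha : DenseRange (· • a : ℕ → G)) {F : Set G} (hF : IsClosed F)
    (hne : F.Nonempty) (hadd : ∀ x ∈ F, x + a ∈ F) : F = univ := by
  obtain ⟨x₀, hx₀⟩ := hne
  have horbit : ∀ n : ℕ, x₀ + n • a ∈ F := by
    intro n
    induction n with
    | zero => simpa using hx₀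
    | succ n ih => simpa [succ_nsmul, add_assoc] using hadd _ ih
  have hdense : DenseRange fun n : ℕ => x₀ + n • a :=
    (Equiv.addLeft x₀).surjective.denseRange.comp ha (continuous_const_add x₀)
  exact eq_univ_of_univ_subset <|
    hdense.closure_range ▸ closure_minimal (range_subset_iff.2 horbit) hF

theorem AddCircle.eq_top_or_exists_nsmul_eq_zero {p : ℝ} [Fact (0 < p)]
    {H : AddSubgroup (AddCircle p)} (hH : IsClosed (H : Set (AddCircle p))) :
    H = ⊤ ∨ ∃ k : ℕ, 0 < k ∧ ∀ t ∈ H, k • t = 0 := by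
  by_cases hd : Dense (H : Set (AddCircle p))
  · exact Or.inl (SetLike.coe_injective (hH.closure_eq ▸ hd.closure_eq))
  · right
    obtain ⟨a, ha, rfl⟩ : ∃ a, addOrderOf a ≠ 0 ∧ H = .zmultiples a := by
      simpa [AddCircle.dense_addSubgroup_iff_ne_zmultiples] using hd
    refine ⟨addOrderOf a, Nat.pos_of_ne_zero ha, ?_⟩
    rintro _ ⟨j, rfl⟩
    rw [smul_comm, addOrderOf_nsmul_eq_zero, smul_zero]

section MinimalSet

variable {X : Type*} [TopologicalSpace X]

def IsMinimalSet (T : X → X) (M : Set X) : Prop :=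
  Minimal (fun s : Set X => s.Nonempty ∧ IsClosed s ∧ MapsTo T s s) M

theorem exists_isMinimalSet_subset [CompactSpace X] (T : X → X) {A : Set X} (hne : A.Nonempty)
    (hA : IsClosed A) (hTA : MapsTo T A A) : ∃ M ⊆ A, IsMinimalSet T M := by
  refine zorn_superset_nonempty _ (fun c hcS hc hcne => ?_) A ⟨hne, hA, hTA⟩
  have : Nonempty c := hcne.to_subtype
  refine ⟨⋂₀ c, ⟨?_, isClosed_sInter fun s hs => (hcS hs).2.1, ?_⟩,
    fun s hs => sInter_subset_of_mem hs⟩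
  · exact IsCompact.nonempty_sInter_of_directed_nonempty_isCompact_isClosed
      (IsChain.directedOn (r := fun s t : Set X => s ⊇ t) hc.symm) (fun s hs => (hcS hs).1)
      (fun s hs => (hcS hs).2.1.isCompact) fun s hs => (hcS hs).2.1
  · exact fun x hx => mem_sInter.2 fun s hs => (hcS hs).2.2 (hx s hs)

namespace IsMinimalSet

variable {T : X → X} {M M' : Set X}

theorem nonempty (hM : IsMinimalSet T M) : M.Nonempty := hM.prop.1

theorem isClosed (hM : IsMinimalSet T M) : IsClosed M := hM.prop.2.1

theorem mapsTo (hM : IsMinimalSet T M) : MapsTo T M M := hM.prop.2.2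

theorem eq_of_subset (hM : IsMinimalSet T M) {A : Set X} (hAM : A ⊆ M) (hne : A.Nonempty)
    (hA : IsClosed A) (hTA : MapsTo T A A) : A = M :=
  hM.eq_of_le ⟨hne, hA, hTA⟩ hAM

theorem eq_of_inter_nonempty (hM : IsMinimalSet T M) (hM' : IsMinimalSet T M')
    (h : (M ∩ M').Nonempty) : M = M' := by
  have hcl := hM.isClosed.inter hM'.isClosed
  have hT := hM.mapsTo.inter_inter hM'.mapsTo
  exact (hM.eq_of_subset inter_subset_left h hcl hT).symm.trans
    (hM'.eq_of_subset inter_subset_right h hcl hT)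

theorem image_homeomorph (hM : IsMinimalSet T M) (h : X ≃ₜ X) (hc : Function.Commute h T) :
    IsMinimalSet T (h '' M) := by
  refine ⟨⟨hM.nonempty.image h, h.isClosedMap _ hM.isClosed, ?_⟩, fun B hB hBM => ?_⟩
  · rintro _ ⟨x, hx, rfl⟩
    exact ⟨T x, hM.mapsTo hx, hc x⟩
  have hc' : Function.Commute h.symm T := Semiconj.inverse_left hc h.left_inv h.right_inv
  have hBM' : h.symm '' B ⊆ M := by
    rw [← h.toEquiv.symm_image_image M]; exact image_mono hBM
  have hTB : MapsTo T (h.symm '' B) (h.symm '' B) := by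
    rintro _ ⟨x, hx, rfl⟩
    exact ⟨T x, hB.2.2 hx, hc' x⟩
  rw [← hM.eq_of_subset hBM' (hB.1.image _) (h.symm.isClosedMap _ hB.2.1) hTB]
  exact (h.toEquiv.image_symm_image B).subset

end IsMinimalSet

end MinimalSet

section SkewShift

variable {G : Type*}

section AddCommMonoid

variable [AddCommMonoid G]

def skewShift (a c : G) (p : G × G) : G × G := (p.1 + a, p.2 + p.1 + c)

theorem skewShift_iterate (a c : G) (n : ℕ) :
    ∃ e : G, ∀ p, (skewShift a c)^[n] p = (p.1 + n • a, p.2 + n • p.1 + e) := by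
  induction n with
  | zero => exact ⟨0, fun p => by simp⟩
  | succ n ih =>
    obtain ⟨e, he⟩ := ih
    refine ⟨e + n • a + c, fun p => ?_⟩
    rw [iterate_succ_apply', he]
    ext <;> simp only [skewShift, succ_nsmul] <;> abel

theorem skewShift_commute_vertical (a c t : G) :
    Function.Commute (((0 : G), t) + ·) (skewShift a c) := fun p => by
  ext <;> simp only [skewShift, Prod.fst_add, Prod.snd_add] <;> abel

end AddCommMonoid

variable [AddCommGroup G]

def verticalStabilizer (M : Set (G × G)) : AddSubgroup G :=
  (AddAction.stabilizer (G × G) M).comap (AddMonoidHom.inr G G)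

theorem mem_verticalStabilizer {M : Set (G × G)} {t : G} :
    t ∈ verticalStabilizer M ↔ ((0 : G), t) +ᵥ M = M :=
  AddAction.mem_stabilizer_iff

variable [TopologicalSpace G] [IsTopologicalAddGroup G]

theorem continuous_skewShift (a c : G) : Continuous (skewShift a c) := by
  unfold skewShift; fun_prop

namespace IsMinimalSet

variable {a c : G} {M : Set (G × G)}

theorem vadd_vertical (hM : IsMinimalSet (skewShift a c) M) (t : G) :
    IsMinimalSet (skewShift a c) (((0 : G), t) +ᵥ M) := by
  rw [← image_vadd]
  exact hM.image_homeomorph (Homeomorph.addLeft _) (skewShift_commute_vertical a c t)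

theorem mem_verticalStabilizer_iff (hM : IsMinimalSet (skewShift a c) M) {t : G} :
    t ∈ verticalStabilizer M ↔ ∀ p ∈ M, ((0 : G), t) + p ∈ M := by
  refine mem_verticalStabilizer.trans ⟨fun h p hp => h ▸ vadd_mem_vadd_set hp, fun h => ?_⟩
  have hsub : ((0 : G), t) +ᵥ M ⊆ M := by
    rintro _ ⟨p, hp, rfl⟩; exact h p hp
  obtain ⟨p, hp⟩ := hM.nonempty
  exact (hM.vadd_vertical t).eq_of_inter_nonempty hM (by
    rw [inter_eq_left.2 hsub]; exact ⟨_, vadd_mem_vadd_set hp⟩)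

theorem isClosed_verticalStabilizer (hM : IsMinimalSet (skewShift a c) M) :
    IsClosed (verticalStabilizer M : Set G) := by
  have : (verticalStabilizer M : Set G) = ⋂ p ∈ M, (fun t : G => ((0 : G), t) + p) ⁻¹' M := by
    ext t; simp [hM.mem_verticalStabilizer_iff]
  rw [this]
  exact isClosed_biInter fun p _ => hM.isClosed.preimage (by fun_prop)

theorem sub_mem_verticalStabilizer (hM : IsMinimalSet (skewShift a c) M) {p q : G × G}
    (hp : p ∈ M) (hq : q ∈ M) (hpq : p.1 = q.1) :
    q.2 - p.2 ∈ verticalStabilizer M := by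
  rw [mem_verticalStabilizer]
  refine (hM.vadd_vertical _).eq_of_inter_nonempty hM ⟨q, ⟨p, hp, ?_⟩, hq⟩
  ext <;> simp [hpq]

end IsMinimalSet

end SkewShift

theorem eq_zero_of_continuous_of_add_nsmul_eq {a : 𝕋} (ha : DenseRange (· • a : ℕ → 𝕋))
    {ψ : 𝕋 → 𝕋} (hψ : Continuous ψ) {k : ℕ}
    (h : ∀ n : ℕ, ∃ d, ∀ x, ψ (x + n • a) = ψ x + (n * k) • x + d) : k = 0 := by
  by_contra hk
  obtain ⟨δ, hδ, hψδ⟩ := Metric.uniformContinuous_iff.1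
    (CompactSpace.uniformContinuous_of_continuous hψ) (1 / 2) one_half_pos
  obtain ⟨n, hn⟩ := ha.exists_mem_open (Metric.isOpen_ball (x := -a)) (Metric.nonempty_ball.2 hδ)
  obtain ⟨d, hd⟩ := h (n + 1)
  have hm : (((n + 1) * k : ℕ) : ℤ) ≠ 0 := by positivity
  set x := DivisibleBy.div (((1 / 2 : ℝ) : 𝕋) - d) (((n + 1) * k : ℕ) : ℤ)
  have hx : ((n + 1) * k) • x + d = ((1 / 2 : ℝ) : 𝕋) := by
    rw [← natCast_zsmul, DivisibleBy.div_cancel _ hm, sub_add_cancel]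
  have hclose : dist (x + (n + 1) • a) x < δ := by
    rwa [dist_self_add_left, succ_nsmul, ← sub_neg_eq_add, ← dist_eq_norm]
  have hfar := hψδ hclose
  rw [hd, add_assoc, dist_self_add_left, hx, AddCircle.norm_half_period_eq] at hfar
  norm_num at hfar

namespace IsMinimalSet

variable {a c : 𝕋} {M : Set (𝕋 × 𝕋)}

theorem fst_image_eq_univ (hM : IsMinimalSet (skewShift a c) M)
    (ha : DenseRange (· • a : ℕ → 𝕋)) : Prod.fst '' M = univ := by
  refine (isClosedMap_fst_of_compactSpace _ hM.isClosed).eq_univ_of_add_mem ha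
    (hM.nonempty.image _) ?_
  rintro _ ⟨p, hp, rfl⟩
  exact ⟨_, hM.mapsTo hp, rfl⟩

theorem exists_continuous_nsmul_snd_eq (hM : IsMinimalSet (skewShift a c) M)
    (ha : DenseRange (· • a : ℕ → 𝕋)) {k : ℕ} (hk : ∀ t ∈ verticalStabilizer M, k • t = 0) :
    ∃ ψ : 𝕋 → 𝕋, Continuous ψ ∧ ∀ p ∈ M, k • p.2 = ψ p.1 := by
  choose y hyM hy using fun x : 𝕋 => hM.fst_image_eq_univ ha ▸ mem_univ x
  have hψ : ∀ p ∈ M, k • p.2 = k • (y p.1).2 := fun p hp => by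
    have := hk _ (hM.sub_mem_verticalStabilizer (hyM p.1) hp (hy p.1))
    rwa [smul_sub, sub_eq_zero] at this
  refine ⟨fun x => k • (y x).2, continuous_of_isClosed_graph ?_, hψ⟩
  have hgraph : {q : 𝕋 × 𝕋 | q.2 = k • (y q.1).2} = (fun p => (p.1, k • p.2)) '' M := by
    ext ⟨x, z⟩
    constructor
    · rintro (rfl : z = k • (y x).2)
      exact ⟨y x, hyM x, Prod.ext (hy x) rfl⟩
    · rintro ⟨p, hp, hpq⟩
      simp only [Prod.mk.injEq] at hpq
      rw [mem_ofPred_eq, ← hpq.1, ← hpq.2, hψ p hp]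
  rw [hgraph]
  exact (hM.isClosed.isCompact.image (by fun_prop)).isClosed

theorem verticalStabilizer_eq_top (hM : IsMinimalSet (skewShift a c) M)
    (ha : DenseRange (· • a : ℕ → 𝕋)) : verticalStabilizer M = ⊤ := by
  refine (AddCircle.eq_top_or_exists_nsmul_eq_zero hM.isClosed_verticalStabilizer).resolve_right ?_
  rintro ⟨k, hk, hkM⟩
  obtain ⟨ψ, hψc, hψ⟩ := hM.exists_continuous_nsmul_snd_eq ha hkM
  refine hk.ne' (eq_zero_of_continuous_of_add_nsmul_eq ha hψc fun n => ?_)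
  obtain ⟨e, he⟩ := skewShift_iterate a c n
  refine ⟨k • e, fun x => ?_⟩
  obtain ⟨p, hp, rfl⟩ := hM.fst_image_eq_univ ha ▸ mem_univ x
  have hn := hψ _ (hM.mapsTo.iterate n hp)
  rw [he] at hn
  rw [← hn, ← hψ p hp, smul_add, smul_add, smul_smul, mul_comm k n]

theorem eq_univ (hM : IsMinimalSet (skewShift a c) M) (ha : DenseRange (· • a : ℕ → 𝕋)) :
    M = univ := by
  refine eq_univ_of_forall fun q => ?_
  obtain ⟨p, hp, hpq⟩ := hM.fst_image_eq_univ ha ▸ mem_univ q.1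
  have ht : q.2 - p.2 ∈ verticalStabilizer M :=
    hM.verticalStabilizer_eq_top ha ▸ AddSubgroup.mem_top _
  convert hM.mem_verticalStabilizer_iff.1 ht p hp using 1
  ext <;> simp [hpq]

end IsMinimalSet

theorem denseRange_skewShift_iterate {a : 𝕋} (ha : DenseRange (· • a : ℕ → 𝕋)) (c : 𝕋)
    (p : 𝕋 × 𝕋) : DenseRange fun n : ℕ => (skewShift a c)^[n] p := by
  have hmaps : MapsTo (skewShift a c) (range fun n : ℕ => (skewShift a c)^[n] p)
      (range fun n : ℕ => (skewShift a c)^[n] p) := by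
    rintro _ ⟨n, rfl⟩
    exact ⟨n + 1, iterate_succ_apply' _ _ _⟩
  obtain ⟨M, hMsub, hM⟩ := exists_isMinimalSet_subset (skewShift a c)
    ⟨p, subset_closure (mem_range_self 0)⟩ isClosed_closure
    (hmaps.closure (continuous_skewShift a c))
  exact dense_iff_closure_eq.2 (eq_univ_of_univ_subset (hM.eq_univ ha ▸ hMsub))

theorem Icc_prod_Icc_subset_closure_range_fract {ι : Type*} {u v : ι → ℝ}
    (h : DenseRange fun i => ((u i : 𝕋), (v i : 𝕋))) :
    Icc (0 : ℝ) 1 ×ˢ Icc (0 : ℝ) 1 ⊆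
      closure (range fun i => (Int.fract (u i), Int.fract (v i))) := by
  let f : 𝕋 × 𝕋 → ℝ × ℝ := fun z => (AddCircle.equivIco 1 0 z.1, AddCircle.equivIco 1 0 z.2)
  have hf : ∀ x y : ℝ, f (x, y) = (Int.fract x, Int.fract y) := by simp [f]
  have hrange : (range fun i => (Int.fract (u i), Int.fract (v i))) =
      f '' range fun i => ((u i : 𝕋), (v i : 𝕋)) := by
    rw [← range_comp]; simp only [comp_def, hf]
  have hcont : ∀ x ∈ Ioo (0 : ℝ) 1,
      ContinuousAt (fun z : 𝕋 => (AddCircle.equivIco 1 0 z : ℝ)) (x : 𝕋) := by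
    refine fun x hx => continuousAt_subtype_val.comp (AddCircle.continuousAt_equivIco 1 0 ?_)
    intro h0
    have := congrArg (fun z : 𝕋 => (AddCircle.equivIco 1 0 z : ℝ)) h0
    simp only [AddCircle.coe_equivIco_mk_apply, div_one, mul_one, Int.fract_zero,
      Int.fract_eq_self.2 ⟨hx.1.le, hx.2⟩] at this
    exact hx.1.ne' this
  have hIoo : Ioo (0 : ℝ) 1 ×ˢ Ioo (0 : ℝ) 1 ⊆
      closure (range fun i => (Int.fract (u i), Int.fract (v i))) := by
    rintro ⟨x, y⟩ ⟨hx, hy⟩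
    have hxy : f ((x : 𝕋), (y : 𝕋)) ∈ closure (f '' range fun i => ((u i : 𝕋), (v i : 𝕋))) :=
      mem_closure_image ((hcont x hx).fst''.prodMk (hcont y hy).snd'') (h ((x : 𝕋), (y : 𝕋)))
    rwa [← hrange, hf, Int.fract_eq_self.2 ⟨hx.1.le, hx.2⟩,
      Int.fract_eq_self.2 ⟨hy.1.le, hy.2⟩] at hxy
  rw [← closure_Ioo zero_ne_one, ← closure_prod_eq]
  exact closure_minimal hIoo isClosed_closure

theorem stmt2 (r : ℝ) (hr : Irrational r) :
    (Dense {z : UnitAddCircle × UnitAddCircle |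
      ∃ n : ℕ, z = (((2 * r * n : ℝ) : UnitAddCircle), ((r * n ^ 2 : ℝ) : UnitAddCircle))}) ∧
    (Set.Icc (0:ℝ) 1 ×ˢ Set.Icc (0:ℝ) 1 ⊆
      closure {x : ℝ × ℝ | ∃ n : ℕ, x = (Int.fract (2 * r * n), Int.fract (r * n ^ 2))}) := by
  have ha : DenseRange (· • ((2 * r : ℝ) : 𝕋) : ℕ → 𝕋) :=
    denseRange_zsmul_iff_nsmul.1 (AddCircle.denseRange_zsmul_coe_iff.2 (by
      simpa using hr.natCast_mul two_ne_zero))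
  have horbit : ∀ n : ℕ, (skewShift ((2 * r : ℝ) : 𝕋) (r : 𝕋))^[n] (0, 0) =
      (((2 * r * n : ℝ) : 𝕋), ((r * n ^ 2 : ℝ) : 𝕋)) := by
    intro n
    induction n with
    | zero => simp
    | succ n ih =>
      rw [iterate_succ_apply', ih]
      ext <;> simp only [skewShift, ← AddCircle.coe_add] <;> congr 1 <;> push_cast <;> ring
  have hdense : DenseRange fun n : ℕ => (((2 * r * n : ℝ) : 𝕋), ((r * n ^ 2 : ℝ) : 𝕋)) := by
    simpa only [horbit] using denseRange_skewShift_iterate ha (r : 𝕋) (0, 0)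
  have hsetOf : ∀ {α : Type} (g : ℕ → α), {z | ∃ n, z = g n} = range g :=
    fun g => ext fun _ => exists_congr fun _ => eq_comm
  rw [hsetOf, hsetOf]
  exact ⟨hdense, Icc_prod_Icc_subset_closure_range_fract hdense⟩
end

section
/- For every irrational α ∈ ℝ and every β ∈ ℝ, the map T : 𝕋² → 𝕋² induced by (x, y) ↦ (x + α, y + x + β) on ℝ²/ℤ² is minimal: for every point z ∈ 𝕋², the forward orbit {Tⁿ(z) : n ∈ ℕ} is dense in 𝕋². -/
/-!
Let `M` be a minimal closed `T`-invariant subset of the closure of the orbit. Its projection to the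
first circle is invariant under the irrational rotation by `α`, hence is the whole circle. The
vertical translations `(x, y) ↦ (x, y + s)` commute with `T`, so they permute minimal sets, and two
minimal sets that meet coincide. Hence the vertical translations preserving `M` form a closed
subgroup `H` of the circle that contains the difference of any two points of a fibre of `M`. If
`H` is the whole circle, then `M = 𝕋²`. Otherwise `H` is finite, of exponent `m` say, and
`(x, y) ↦ (x, m • y)` maps `M` onto the graph of a continuous `φ` with
`φ (x + α) = φ x + m • x + m • β`. Iterating gives `φ (x + n • α) - φ x = (n * m) • x + cₙ`. This
is impossible when `n • α` is close to `0`: the left side is then uniformly small, while the right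
side is surjective in `x`.
-/

/-- The skew translation `(x, y) ↦ (x + α, y + x + β)` on the 2-torus `𝕋² = (ℝ/ℤ) × (ℝ/ℤ)`. -/
noncomputable def skewTranslation (α β : ℝ) :
    UnitAddCircle × UnitAddCircle → UnitAddCircle × UnitAddCircle :=
  fun z => (z.1 + (α : UnitAddCircle), z.2 + z.1 + (β : UnitAddCircle))

open Set Function Pointwise

section MinimalInvariant

variable {X : Type*} [TopologicalSpace X]

structure IsMinimalInvariant (f : X → X) (M : Set X) : Prop where
  nonempty : M.Nonempty
  isClosed : IsClosed M
  mapsTo : MapsTo f M M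
  eq_of_subset : ∀ N ⊆ M, N.Nonempty → IsClosed N → MapsTo f N N → N = M

variable {f : X → X} {M N : Set X}

theorem exists_isMinimalInvariant_subset [CompactSpace X] {S : Set X} (hne : S.Nonempty)
    (hcl : IsClosed S) (hS : MapsTo f S S) : ∃ M ⊆ S, IsMinimalInvariant f M := by
  set 𝒮 := {N : Set X | N.Nonempty ∧ IsClosed N ∧ MapsTo f N N}
  have chain_bound : ∀ c ⊆ 𝒮, IsChain (· ⊆ ·) c → c.Nonempty →
      ∃ lb ∈ 𝒮, ∀ N ∈ c, lb ⊆ N := by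
    intro c hc hchain hcne
    have : Nonempty c := hcne.to_subtype
    have hdir : DirectedOn (· ⊇ ·) c := fun A hA B hB =>
      (hchain.total hA hB).elim (fun h => ⟨A, hA, subset_rfl, h⟩) fun h => ⟨B, hB, h, subset_rfl⟩
    refine ⟨⋂₀ c, ⟨?_, isClosed_sInter fun N hN => (hc hN).2.1, ?_⟩,
      fun N hN => sInter_subset_of_mem hN⟩
    · exact IsCompact.nonempty_sInter_of_directed_nonempty_isCompact_isClosed
        hdir (fun N hN => (hc hN).1) (fun N hN => (hc hN).2.1.isCompact)
        fun N hN => (hc hN).2.1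
    · exact fun x hx => mem_sInter.2 fun N hN => (hc hN).2.2 (hx N hN)
  obtain ⟨M, hMS, hM⟩ := zorn_superset_nonempty 𝒮 chain_bound S ⟨hne, hcl, hS⟩
  exact ⟨M, hMS, hM.1.1, hM.1.2.1, hM.1.2.2, fun N hNM hN hNcl hNf =>
    subset_antisymm hNM (hM.2 ⟨hN, hNcl, hNf⟩ hNM)⟩

namespace IsMinimalInvariant

theorem image_eq [CompactSpace X] [T2Space X] (hM : IsMinimalInvariant f M)
    (hf : Continuous f) : f '' M = M :=
  hM.eq_of_subset _ hM.mapsTo.image_subset (hM.nonempty.image f)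
    (hM.isClosed.isCompact.image hf).isClosed
    ((mapsTo_image f M).mono_left hM.mapsTo.image_subset)

theorem eq_of_inter_nonempty (hM : IsMinimalInvariant f M) (hN : IsMinimalInvariant f N)
    (h : (M ∩ N).Nonempty) : M = N := by
  have hcl := hM.isClosed.inter hN.isClosed
  have hmaps := hM.mapsTo.inter_inter hN.mapsTo
  exact (hM.eq_of_subset _ inter_subset_left h hcl hmaps).symm.trans
    (hN.eq_of_subset _ inter_subset_right h hcl hmaps)

theorem image_homeomorph (hM : IsMinimalInvariant f M) (g : X ≃ₜ X) (hg : Function.Commute f g) :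
    IsMinimalInvariant f (g '' M) where
  nonempty := hM.nonempty.image g
  isClosed := g.isClosedMap M hM.isClosed
  mapsTo := by
    rintro _ ⟨x, hx, rfl⟩
    exact ⟨f x, hM.mapsTo hx, (hg x).symm⟩
  eq_of_subset N hN hne hcl hf := by
    have hg' : Function.Commute f g.symm := fun y => by
      rw [← g.symm_apply_apply (f (g.symm y)), ← hg, g.apply_symm_apply]
    have : g.symm '' N = M := hM.eq_of_subset _ ((image_mono hN).trans (g.symm_image_image M).le)
      (hne.image _) (g.symm.isClosedMap N hcl) (by
        rintro _ ⟨y, hy, rfl⟩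
        exact ⟨f y, hf hy, (hg' y).symm⟩)
    rw [← this, ← image_comp, g.self_comp_symm, image_id]

end IsMinimalInvariant

theorem dense_iterate_orbit_of_forall_isMinimalInvariant [CompactSpace X] (hf : Continuous f)
    (h : ∀ M, IsMinimalInvariant f M → M = univ) (z : X) :
    Dense {w | ∃ n : ℕ, w = f^[n] z} := by
  set O := {w | ∃ n : ℕ, w = f^[n] z}
  have hO : MapsTo f O O := by
    rintro _ ⟨n, rfl⟩
    exact ⟨n + 1, (iterate_succ_apply' f n z).symm⟩
  obtain ⟨M, hMO, hM⟩ := exists_isMinimalInvariant_subset (S := closure O)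
    ⟨z, subset_closure ⟨0, rfl⟩⟩ isClosed_closure (hO.closure hf)
  exact dense_iff_closure_eq.2 (eq_univ_of_univ_subset (h M hM ▸ hMO))

end MinimalInvariant

theorem continuous_of_isClosed_graph_s3 {X Y : Type*} [TopologicalSpace X] [TopologicalSpace Y]
    [CompactSpace Y] {φ : X → Y} (h : IsClosed {q : X × Y | q.2 = φ q.1}) : Continuous φ := by
  refine continuous_iff_isClosed.2 fun F hF => ?_
  have : φ ⁻¹' F = Prod.fst '' ({q : X × Y | q.2 = φ q.1} ∩ univ ×ˢ F) := by
    ext x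
    simp
  rw [this]
  exact isClosedMap_fst_of_compactSpace _ (h.inter (isClosed_univ.prod hF))

section Stabilizer

variable {G : Type*} [AddGroup G] {C : Set G}

theorem eq_univ_of_stabilizer_eq_top (hne : C.Nonempty) (h : AddAction.stabilizer G C = ⊤) :
    C = univ := by
  obtain ⟨c, hc⟩ := hne
  refine eq_univ_of_forall fun x => ?_
  have hx : (x - c) +ᵥ C = C := AddAction.mem_stabilizer_iff.1 (h ▸ AddSubgroup.mem_top _)
  rw [← hx]
  exact ⟨c, hc, sub_add_cancel x c⟩

variable [TopologicalSpace G]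

theorem isClosed_setOf_vadd_subset [ContinuousAdd G] (hC : IsClosed C) :
    IsClosed {g : G | g +ᵥ C ⊆ C} := by
  simp only [vadd_set_subset_iff, ofPred_forall]
  exact isClosed_biInter fun c _ => hC.preimage (continuous_add_const c)

variable [IsTopologicalAddGroup G]

theorem isClosed_stabilizer (hC : IsClosed C) : IsClosed (AddAction.stabilizer G C : Set G) := by
  have : (AddAction.stabilizer G C : Set G) =
      {g : G | g +ᵥ C ⊆ C} ∩ Neg.neg ⁻¹' {g : G | g +ᵥ C ⊆ C} := by
    ext g
    simp [subset_antisymm_iff, subset_vadd_set_iff]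
  rw [this]
  exact (isClosed_setOf_vadd_subset hC).inter
    ((isClosed_setOf_vadd_subset hC).preimage continuous_neg)

theorem IsClosed.eq_univ_of_dense_stabilizer (hC : IsClosed C) (hne : C.Nonempty)
    (hd : Dense (AddAction.stabilizer G C : Set G)) : C = univ := by
  refine eq_univ_of_stabilizer_eq_top hne (SetLike.coe_injective ?_)
  rw [AddSubgroup.coe_top, ← (isClosed_stabilizer hC).closure_eq, hd.closure_eq]

end Stabilizer

theorem exists_map_add_nsmul_eq {A : Type*} [AddCommGroup A] {φ : A → A} {a c : A} {m : ℕ}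
    (hφ : ∀ x, φ (x + a) = φ x + m • x + c) (n : ℕ) :
    ∃ c', ∀ x, φ (x + n • a) = φ x + (n * m) • x + c' := by
  induction n with
  | zero => exact ⟨0, fun x => by simp⟩
  | succ n ih =>
    obtain ⟨c', hc'⟩ := ih
    refine ⟨c' + (m * n) • a + c, fun x => ?_⟩
    rw [succ_nsmul, ← add_assoc, hφ, hc']
    module

namespace AddCircle

variable {p : ℝ} [Fact (0 < p)]

theorem exists_nsmul_eq_zero_of_isClosed {H : AddSubgroup (AddCircle p)}
    (hH : IsClosed (H : Set (AddCircle p))) (hne : H ≠ ⊤) :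
    ∃ m : ℕ, 0 < m ∧ ∀ h ∈ H, m • h = 0 := by
  have hnd : ¬ Dense (H : Set (AddCircle p)) := fun hd =>
    hne (SetLike.coe_injective (by rw [AddSubgroup.coe_top, ← hH.closure_eq, hd.closure_eq]))
  rw [dense_addSubgroup_iff_ne_zmultiples] at hnd
  push Not at hnd
  obtain ⟨a, ha, rfl⟩ := hnd
  refine ⟨addOrderOf a, Nat.pos_of_ne_zero ha, ?_⟩
  rintro _ ⟨k, rfl⟩
  rw [smul_comm, addOrderOf_nsmul_eq_zero, smul_zero]

theorem not_continuous_of_map_add_eq {φ : AddCircle p → AddCircle p} {a c : AddCircle p} {m : ℕ}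
    (hm : m ≠ 0) (hφ : ∀ x, φ (x + a) = φ x + m • x + c) : ¬ Continuous φ := by
  intro hc
  have hp : 0 < p := Fact.out
  obtain ⟨δ, hδ, hφδ⟩ := Metric.uniformContinuous_iff.1
    (CompactSpace.uniformContinuous_of_continuous hc) (p / 2) (half_pos hp)
  obtain ⟨N, hN⟩ := exists_nat_gt (p / δ)
  obtain ⟨n, hn, hna⟩ := exists_norm_nsmul_le a (Nat.succ_pos N)
  obtain ⟨c', hc'⟩ := exists_map_add_nsmul_eq hφ n
  have hnm : ((n * m : ℕ) : ℤ) ≠ 0 :=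
    Nat.cast_ne_zero.2 (mul_ne_zero (Nat.one_le_iff_ne_zero.1 hn.1) hm)
  -- `x₀` makes `φ (x₀ + n • a) - φ x₀` the half period, the point of the circle farthest from `0`
  set x₀ := DivisibleBy.div (((p / 2 : ℝ) : AddCircle p) - c') ((n * m : ℕ) : ℤ)
  have hx₀ : (n * m) • x₀ + c' = ((p / 2 : ℝ) : AddCircle p) := by
    rw [← natCast_zsmul, DivisibleBy.div_cancel _ hnm, sub_add_cancel]
  have hclose : dist (x₀ + n • a) x₀ < δ := by
    rw [dist_eq_norm, add_sub_cancel_left]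
    refine hna.trans_lt ((div_lt_iff₀ (by positivity)).2 ?_)
    rw [div_lt_iff₀ hδ] at hN
    push_cast
    linarith
  have := hφδ hclose
  rw [hc', dist_eq_norm, add_assoc, add_sub_cancel_left, hx₀, norm_half_period_eq,
    abs_of_pos hp] at this
  exact lt_irrefl _ this

end AddCircle

local notation "𝕋" => UnitAddCircle

theorem continuous_skewTranslation (α β : ℝ) : Continuous (skewTranslation α β) := by
  unfold skewTranslation
  fun_prop

theorem skewTranslation_vertical_add (α β : ℝ) (s : 𝕋) (q : 𝕋 × 𝕋) :
    skewTranslation α β ((0, s) + q) = (0, s) + skewTranslation α β q := by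
  ext <;> simp only [skewTranslation, Prod.fst_add, Prod.snd_add, zero_add]
  abel

def verticalPeriods (M : Set (𝕋 × 𝕋)) : AddSubgroup 𝕋 :=
  (AddAction.stabilizer (𝕋 × 𝕋) M).comap (AddMonoidHom.inr 𝕋 𝕋)

theorem mem_verticalPeriods {M : Set (𝕋 × 𝕋)} {s : 𝕋} :
    s ∈ verticalPeriods M ↔ ((0 : 𝕋), s) +ᵥ M = M :=
  Iff.rfl

theorem isClosed_verticalPeriods {M : Set (𝕋 × 𝕋)} (hM : IsClosed M) :
    IsClosed (verticalPeriods M : Set 𝕋) :=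
  (isClosed_stabilizer hM).preimage (continuous_const.prodMk continuous_id)

variable {α β : ℝ} {M : Set (𝕋 × 𝕋)}

theorem fst_image_eq_univ (hα : Irrational α) (hM : IsMinimalInvariant (skewTranslation α β) M) :
    Prod.fst '' M = univ := by
  have hC : IsClosed (Prod.fst '' M) := (hM.isClosed.isCompact.image continuous_fst).isClosed
  refine hC.eq_univ_of_dense_stabilizer (hM.nonempty.image _) ?_
  have hα_mem : (α : 𝕋) ∈ AddAction.stabilizer 𝕋 (Prod.fst '' M) := by
    rw [AddAction.mem_stabilizer_iff]
    conv_rhs => rw [← hM.image_eq (continuous_skewTranslation α β)]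
    rw [← image_vadd, image_image, image_image]
    simp [skewTranslation, add_comm]
  refine (AddCircle.denseRange_zsmul_coe_iff.2 (by rwa [div_one])).mono ?_
  rintro _ ⟨k, rfl⟩
  exact zsmul_mem hα_mem k

theorem sub_mem_verticalPeriods (hM : IsMinimalInvariant (skewTranslation α β) M) {x y₁ y₂ : 𝕋}
    (h₁ : (x, y₁) ∈ M) (h₂ : (x, y₂) ∈ M) : y₂ - y₁ ∈ verticalPeriods M := by
  set v : 𝕋 × 𝕋 := (0, y₂ - y₁)
  have hv : IsMinimalInvariant (skewTranslation α β) (v +ᵥ M) := by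
    have := hM.image_homeomorph (Homeomorph.addLeft v) (skewTranslation_vertical_add α β _)
    rwa [Homeomorph.coe_addLeft] at this
  refine hv.eq_of_inter_nonempty hM ⟨(x, y₂), ⟨(x, y₁), h₁, ?_⟩, h₂⟩
  simp [v]

theorem eq_univ_of_verticalPeriods_eq_top (hfst : Prod.fst '' M = univ)
    (htop : verticalPeriods M = ⊤) : M = univ := by
  refine eq_univ_of_forall fun q => ?_
  obtain ⟨r, hr, hrq⟩ : q.1 ∈ Prod.fst '' M := hfst ▸ mem_univ q.1
  have : ((0 : 𝕋), q.2 - r.2) +ᵥ M = M := mem_verticalPeriods.1 (htop ▸ AddSubgroup.mem_top _)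
  rw [← this]
  exact ⟨r, hr, by ext <;> simp [hrq]⟩

theorem exists_continuous_map_add_eq (hM : IsMinimalInvariant (skewTranslation α β) M)
    (hfst : Prod.fst '' M = univ) {m : ℕ} (hm : ∀ s ∈ verticalPeriods M, m • s = 0) :
    ∃ φ : 𝕋 → 𝕋, Continuous φ ∧ ∀ x, φ (x + α) = φ x + m • x + m • (β : 𝕋) := by
  have hfiber : ∀ x, ∃ y, (x, y) ∈ M := fun x => by
    obtain ⟨q, hq, rfl⟩ : x ∈ Prod.fst '' M := hfst ▸ mem_univ x
    exact ⟨q.2, hq⟩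
  choose ψ hψ using hfiber
  have hgraph : ∀ {x y}, (x, y) ∈ M → m • y = m • ψ x := fun h => by
    have := hm _ (sub_mem_verticalPeriods hM (hψ _) h)
    rwa [smul_sub, sub_eq_zero] at this
  refine ⟨fun x => m • ψ x, continuous_of_isClosed_graph_s3 ?_, fun x => ?_⟩
  · have : {q : 𝕋 × 𝕋 | q.2 = m • ψ q.1} = (fun q => (q.1, m • q.2)) '' M := by
      ext ⟨x, w⟩
      constructor
      · intro hw
        exact ⟨(x, ψ x), hψ x, by simp_all⟩
      · rintro ⟨⟨x', y⟩, h, he⟩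
        obtain ⟨rfl, rfl⟩ := Prod.mk.inj he
        exact hgraph h
    rw [this]
    exact (hM.isClosed.isCompact.image (by fun_prop)).isClosed
  · have := hgraph (hM.mapsTo (hψ x))
    simp only [smul_add] at this
    exact this.symm

theorem verticalPeriods_eq_top (hα : Irrational α)
    (hM : IsMinimalInvariant (skewTranslation α β) M) : verticalPeriods M = ⊤ := by
  by_contra hne
  obtain ⟨m, hm, hmH⟩ :=
    AddCircle.exists_nsmul_eq_zero_of_isClosed (isClosed_verticalPeriods hM.isClosed) hne
  obtain ⟨φ, hφc, hφ⟩ := exists_continuous_map_add_eq hM (fst_image_eq_univ hα hM) hmH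
  exact AddCircle.not_continuous_of_map_add_eq hm.ne' hφ hφc

theorem IsMinimalInvariant.eq_univ_of_irrational (hα : Irrational α)
    (hM : IsMinimalInvariant (skewTranslation α β) M) : M = univ :=
  eq_univ_of_verticalPeriods_eq_top (fst_image_eq_univ hα hM) (verticalPeriods_eq_top hα hM)

theorem stmt3 (α β : ℝ) (hα : Irrational α) (z : UnitAddCircle × UnitAddCircle) :
    Dense {w : UnitAddCircle × UnitAddCircle | ∃ n : ℕ, w = (skewTranslation α β)^[n] z} :=
  dense_iterate_orbit_of_forall_isMinimalInvariant (continuous_skewTranslation α β)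
    (fun _ hM => hM.eq_univ_of_irrational hα) z
end

section
/- Let p ∈ (0, π), r > 0 and z ∈ ℝ satisfy (2p − sin 2p)/(8 sin²p) = |z| / r². Then √((√(r⁴ + 48z²) + r²)/2) ≤ (p / sin p) · r ≤ √((√(r⁴ + 64π²z²) + r²)/2). -/
/-!
Put `d = p r / sin p`. The map `w ↦ √((√(r⁴ + w) + r²) / 2)` is monotone and takes the value `d`
at `w = 4d²(d² − r²)`, so both bounds amount to `48z² ≤ 4d²(d² − r²) ≤ 64π²z²`. Eliminating `z`
through the relation between `p` and `|z| / r²`, these become the trigonometric inequalities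
`3(2p − sin 2p)² ≤ 16p²(p² − sin²p) ≤ 4π²(2p − sin 2p)²` on `[0, π]`, which follow from Taylor
bounds of `sin` and `cos` for small `p` and from `|sin| ≤ 1` for large `p`.
-/

open Real

lemma le_of_hasDerivAt_le_of_nonneg {f g f' g' : ℝ → ℝ} (hf : ∀ x, HasDerivAt f (f' x) x)
    (hg : ∀ x, HasDerivAt g (g' x) x) (h₀ : f 0 ≤ g 0) (h' : ∀ x, 0 ≤ x → f' x ≤ g' x)
    {x : ℝ} (hx : 0 ≤ x) : f x ≤ g x := by
  have hmono : MonotoneOn (g - f) (Set.Ici 0) :=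
    monotoneOn_of_hasDerivWithinAt_nonneg (convex_Ici 0)
      (fun y _ => ((hg y).sub (hf y)).continuousAt.continuousWithinAt)
      (fun y _ => ((hg y).sub (hf y)).hasDerivWithinAt)
      (fun y hy => sub_nonneg.2 (h' y (interior_subset hy)))
  have := hmono Set.self_mem_Ici hx hx
  simp only [Pi.sub_apply] at this
  linarith

namespace Real

variable {x : ℝ}

lemma cos_le_taylor4 (hx : 0 ≤ x) : cos x ≤ 1 - x ^ 2 / 2 + x ^ 4 / 24 :=
  le_of_hasDerivAt_le_of_nonneg hasDerivAt_cos
    (fun y => ((hasDerivAt_const y 1).sub ((hasDerivAt_pow 2 y).div_const 2)).add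
      ((hasDerivAt_pow 4 y).div_const 24))
    (by norm_num) (fun y hy => by norm_num; linarith [sin_ge_sub_cube hy]) hx

lemma sin_le_taylor5 (hx : 0 ≤ x) : sin x ≤ x - x ^ 3 / 6 + x ^ 5 / 120 :=
  le_of_hasDerivAt_le_of_nonneg hasDerivAt_sin
    (fun y => ((hasDerivAt_id y).sub ((hasDerivAt_pow 3 y).div_const 6)).add
      ((hasDerivAt_pow 5 y).div_const 120))
    (by norm_num) (fun y hy => by norm_num; linarith [cos_le_taylor4 hy]) hx

lemma taylor6_le_cos (hx : 0 ≤ x) : 1 - x ^ 2 / 2 + x ^ 4 / 24 - x ^ 6 / 720 ≤ cos x :=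
  le_of_hasDerivAt_le_of_nonneg
    (fun y => (((hasDerivAt_const y 1).sub ((hasDerivAt_pow 2 y).div_const 2)).add
      ((hasDerivAt_pow 4 y).div_const 24)).sub ((hasDerivAt_pow 6 y).div_const 720))
    hasDerivAt_cos (by norm_num) (fun y hy => by norm_num; linarith [sin_le_taylor5 hy]) hx

lemma taylor7_le_sin (hx : 0 ≤ x) :
    x - x ^ 3 / 6 + x ^ 5 / 120 - x ^ 7 / 5040 ≤ sin x :=
  le_of_hasDerivAt_le_of_nonneg
    (fun y => (((hasDerivAt_id y).sub ((hasDerivAt_pow 3 y).div_const 6)).add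
      ((hasDerivAt_pow 5 y).div_const 120)).sub ((hasDerivAt_pow 7 y).div_const 5040))
    hasDerivAt_sin (by norm_num) (fun y hy => by norm_num; linarith [taylor6_le_cos hy]) hx

lemma three_mul_sq_two_mul_sub_sin_le {p : ℝ} (hp : 0 ≤ p) :
    3 * (2 * p - sin (2 * p)) ^ 2 ≤ 16 * p ^ 2 * (p ^ 2 - sin p ^ 2) := by
  rcases le_or_gt p (5 / 2) with hp_small | hp_large
  · set S := p - p ^ 3 / 6 + p ^ 5 / 120
    set V := 4 / 3 * p ^ 3 - 4 / 15 * p ^ 5 + 8 / 315 * p ^ 7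
    have hq₀ : 0 ≤ 2 * p - sin (2 * p) := by linarith [sin_le (by linarith : (0 : ℝ) ≤ 2 * p)]
    have hqV : 2 * p - sin (2 * p) ≤ V := by
      linear_combination taylor7_le_sin (by linarith : (0 : ℝ) ≤ 2 * p)
    have hsS : sin p ^ 2 ≤ S ^ 2 :=
      pow_le_pow_left₀ (sin_nonneg_of_nonneg_of_le_pi hp (by linarith [pi_gt_three]))
        (sin_le_taylor5 hp) 2
    have hpoly : 16 * p ^ 2 * (p ^ 2 - S ^ 2) - 3 * V ^ 2 =
        4 * p ^ 8 * (16 / 45 - 293 / 3150 * p ^ 2 + 83 / 8400 * (p ^ 2) ^ 2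
          - 16 / 33075 * (p ^ 2) ^ 3) := by ring
    have hK : 0 ≤ 16 / 45 - 293 / 3150 * p ^ 2 + 83 / 8400 * (p ^ 2) ^ 2
        - 16 / 33075 * (p ^ 2) ^ 3 := by
      have ht : 0 ≤ 25 / 4 - p ^ 2 := by nlinarith
      nlinarith [mul_nonneg (mul_nonneg ht ht) ht]
    calc 3 * (2 * p - sin (2 * p)) ^ 2 ≤ 3 * V ^ 2 := by gcongr
      _ ≤ 16 * p ^ 2 * (p ^ 2 - S ^ 2) := by nlinarith [mul_nonneg (pow_nonneg hp 8) hK]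
      _ ≤ 16 * p ^ 2 * (p ^ 2 - sin p ^ 2) := by gcongr
  · calc 3 * (2 * p - sin (2 * p)) ^ 2 ≤ 3 * (2 * p + 1) ^ 2 := by
          gcongr
          · linarith [sin_le (by linarith : (0 : ℝ) ≤ 2 * p)]
          · linarith [neg_one_le_sin (2 * p)]
      _ ≤ 16 * p ^ 2 * (p ^ 2 - 1) := by nlinarith [sq_nonneg (p - 5 / 2)]
      _ ≤ 16 * p ^ 2 * (p ^ 2 - sin p ^ 2) := by gcongr; exact sin_sq_le_one p

lemma four_mul_sq_mul_sq_sub_sin_sq_le {p : ℝ} (hp₀ : 0 ≤ p) (hpπ : p ≤ π) :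
    4 * p ^ 2 * (p ^ 2 - sin p ^ 2) ≤ π ^ 2 * (2 * p - sin (2 * p)) ^ 2 := by
  rcases le_or_gt p (π / 2) with hp_small | hp_large
  · have hp2 : p ^ 2 ≤ 5 / 2 := by nlinarith [pi_lt_d2]
    have hqW : 4 / 3 * p ^ 3 - 4 / 15 * p ^ 5 ≤ 2 * p - sin (2 * p) := by
      linear_combination sin_le_taylor5 (by linarith : (0 : ℝ) ≤ 2 * p)
    have hW : 2 / 3 * p ^ 3 ≤ 4 / 3 * p ^ 3 - 4 / 15 * p ^ 5 := by
      nlinarith [pow_nonneg hp₀ 3]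
    have hs : (p - p ^ 3 / 6) ^ 2 ≤ sin p ^ 2 :=
      pow_le_pow_left₀ (by nlinarith) (sin_ge_sub_cube hp₀) 2
    calc 4 * p ^ 2 * (p ^ 2 - sin p ^ 2) ≤ 4 * p ^ 2 * (p ^ 2 - (p - p ^ 3 / 6) ^ 2) := by
          gcongr
      _ ≤ 9 * (2 / 3 * p ^ 3) ^ 2 := by nlinarith [pow_nonneg hp₀ 6]
      _ ≤ π ^ 2 * (2 * p - sin (2 * p)) ^ 2 := by
          gcongr
          · nlinarith [pi_gt_three]
          · linarith
  · have hsin : sin (2 * p) ≤ 0 :=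
      sin_sub_two_pi (2 * p) ▸ sin_nonpos_of_nonpos_of_neg_pi_le (by linarith) (by linarith)
    calc 4 * p ^ 2 * (p ^ 2 - sin p ^ 2) ≤ 4 * p ^ 2 * p ^ 2 := by
          gcongr; linarith [sq_nonneg (sin p)]
      _ ≤ 4 * π ^ 2 * p ^ 2 := by gcongr
      _ = π ^ 2 * (2 * p) ^ 2 := by ring
      _ ≤ π ^ 2 * (2 * p - sin (2 * p)) ^ 2 := by gcongr; linarith

lemma sqrt_biquadratic_root_eq {r d : ℝ} (hd : 0 ≤ d) (hrd : r ^ 2 ≤ 2 * d ^ 2) :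
    √((√(r ^ 4 + 4 * d ^ 2 * (d ^ 2 - r ^ 2)) + r ^ 2) / 2) = d := by
  have h : r ^ 4 + 4 * d ^ 2 * (d ^ 2 - r ^ 2) = (2 * d ^ 2 - r ^ 2) ^ 2 := by ring
  rw [h, sqrt_sq (by linarith), show (2 * d ^ 2 - r ^ 2 + r ^ 2) / 2 = d ^ 2 by ring,
    sqrt_sq hd]

end Real

theorem stmt13 (p r z : ℝ) (hp : p ∈ Set.Ioo 0 Real.pi) (hr : 0 < r)
    (hrel : (2 * p - Real.sin (2 * p)) / (8 * Real.sin p ^ 2) = |z| / r ^ 2) :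
    Real.sqrt ((Real.sqrt (r ^ 4 + 48 * z ^ 2) + r ^ 2) / 2) ≤ p / Real.sin p * r ∧
    p / Real.sin p * r ≤
      Real.sqrt ((Real.sqrt (r ^ 4 + 64 * Real.pi ^ 2 * z ^ 2) + r ^ 2) / 2) := by
  obtain ⟨hp₀, hpπ⟩ := hp
  have hs : 0 < sin p := sin_pos_of_pos_of_lt_pi hp₀ hpπ
  set d := p / sin p * r with hd
  have hrd : r ≤ d := le_mul_of_one_le_left hr.le ((one_le_div hs).2 (sin_le hp₀.le))
  set w := 4 * d ^ 2 * (d ^ 2 - r ^ 2)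
  have hdw : √((√(r ^ 4 + w) + r ^ 2) / 2) = d :=
    sqrt_biquadratic_root_eq (hr.le.trans hrd) (by nlinarith)
  have hz : 64 * sin p ^ 4 * z ^ 2 = (2 * p - sin (2 * p)) ^ 2 * r ^ 4 := by
    rw [div_eq_div_iff (by positivity) (by positivity)] at hrel
    rw [← sq_abs z]
    linear_combination (-(2 * p - sin (2 * p)) * r ^ 2 - |z| * (8 * sin p ^ 2)) * hrel
  have hw : sin p ^ 4 * w = 4 * p ^ 2 * (p ^ 2 - sin p ^ 2) * r ^ 4 := by
    simp only [w, hd]; field_simp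
  have hlow : 48 * z ^ 2 ≤ w := by
    refine le_of_mul_le_mul_left ?_ (pow_pos hs 4)
    have := mul_le_mul_of_nonneg_right (three_mul_sq_two_mul_sub_sin_le hp₀.le)
      (pow_nonneg hr.le 4)
    linarith
  have hup : w ≤ 64 * π ^ 2 * z ^ 2 := by
    refine le_of_mul_le_mul_left ?_ (pow_pos hs 4)
    have := mul_le_mul_of_nonneg_right (four_mul_sq_mul_sq_sub_sin_sq_le hp₀.le hpπ.le)
      (pow_nonneg hr.le 4)
    linarith [congrArg (π ^ 2 * ·) hz]
  rw [← hdw]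
  exact ⟨by gcongr, by gcongr⟩
end

section
/- Fix p ≠ 0. Let θ, a, b, c : ℝ → ℝ be differentiable functions satisfying θ'(t) = p, a'(t) = cos θ(t), b'(t) = sin θ(t), c'(t) = a(t) sin θ(t) for all t. Define ã(t) = a(t) − sin θ(t)/p, b̃(t) = b(t) − (1 − cos θ(t))/p, c̃(t) = c(t) + sin 2θ(t)/(4p²) + (1/p)(a(t) − sin θ(t)/p)(cos θ(t) − 1). Then for all t: θ'(t) = p, ã'(t) = 0, b̃'(t) = 0, and c̃'(t) = 1/(2p). -/
/-! Along the normal flow, `a - sin θ / p` and `b - (1 - cos θ) / p` are first integrals, since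
`a' = cos θ = (sin θ / p)'` and `b' = sin θ = ((1 - cos θ) / p)'`. Since `a - sin θ / p` has zero
derivative, the derivative of the third coordinate collapses to `sin² θ / p + cos 2θ / (2p)`, which is
`1 / (2p)` by the double-angle formula. -/

open Real

variable {p : ℝ} {θ a b c : ℝ → ℝ} {t : ℝ}

lemma hasDerivAt_sub_sin_comp_div (hp : p ≠ 0) (hθ : HasDerivAt θ p t)
    (ha : HasDerivAt a (cos (θ t)) t) :
    HasDerivAt (fun s => a s - sin (θ s) / p) 0 t := by
  refine (ha.sub (hθ.sin.div_const p)).congr_deriv ?_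
  rw [mul_div_cancel_right₀ _ hp, sub_self]

lemma hasDerivAt_sub_one_sub_cos_comp_div (hp : p ≠ 0) (hθ : HasDerivAt θ p t)
    (hb : HasDerivAt b (sin (θ t)) t) :
    HasDerivAt (fun s => b s - (1 - cos (θ s)) / p) 0 t := by
  refine (hb.sub ((hθ.cos.const_sub 1).div_const p)).congr_deriv ?_
  rw [neg_mul, neg_neg, mul_div_cancel_right₀ _ hp, sub_self]

lemma hasDerivAt_straightened_third_coord (hp : p ≠ 0) (hθ : HasDerivAt θ p t)
    (ha : HasDerivAt a (cos (θ t)) t) (hc : HasDerivAt c (a t * sin (θ t)) t) :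
    HasDerivAt (fun s => c s + sin (2 * θ s) / (4 * p ^ 2)
      + 1 / p * (a s - sin (θ s) / p) * (cos (θ s) - 1)) (1 / (2 * p)) t := by
  have hA := hasDerivAt_sub_sin_comp_div hp hθ ha
  refine ((hc.add ((hθ.const_mul 2).sin.div_const (4 * p ^ 2))).add
    ((hA.const_mul (1 / p)).mul (hθ.cos.sub_const 1))).congr_deriv ?_
  rw [cos_two_mul]
  field_simp
  linear_combination 8 * sin_sq (θ t)

theorem stmt19 (p : ℝ) (hp : p ≠ 0) (θ a b c : ℝ → ℝ)
    (hθ : ∀ t, HasDerivAt θ p t)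
    (ha : ∀ t, HasDerivAt a (Real.cos (θ t)) t)
    (hb : ∀ t, HasDerivAt b (Real.sin (θ t)) t)
    (hc : ∀ t, HasDerivAt c (a t * Real.sin (θ t)) t) :
    ∀ t : ℝ,
      HasDerivAt θ p t ∧
      HasDerivAt (fun s => a s - Real.sin (θ s) / p) 0 t ∧
      HasDerivAt (fun s => b s - (1 - Real.cos (θ s)) / p) 0 t ∧
      HasDerivAt (fun s => c s + Real.sin (2 * θ s) / (4 * p ^ 2)
        + 1 / p * (a s - Real.sin (θ s) / p) * (Real.cos (θ s) - 1)) (1 / (2 * p)) t :=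
  fun t => ⟨hθ t, hasDerivAt_sub_sin_comp_div hp (hθ t) (ha t),
    hasDerivAt_sub_one_sub_cos_comp_div hp (hθ t) (hb t),
    hasDerivAt_straightened_third_coord hp (hθ t) (ha t) (hc t)⟩
end
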